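/- arXiv:0904.3756 — 7 statements merged into one kernel-verified Lean document; each statement's English description precedes it below -/
import Mathlib

section
/- Given a finite list of nonnegative real numbers x_1,...,x_n with each x_i ≤ 1/2 and ∑ x_i = 1, the index set {1,...,n} can be partitioned into three subsets, each of which has sum of elements at most 1/2. -/
/-!
Cut the sequence at an index `j` where the prefix sums cross `1/2`: the indices before `j`
sum to at most `1/2`, the single index `j` carries `x j ≤ 1/2`, and the indices after
`j` sum to `1` minus a prefix sum exceeding `1/2`, hence to less than `1/2`.
-/

open Finset

theorem Nat.exists_le_and_lt_succ {α : Type*} [LinearOrder α] {f : ℕ → α} {c : α}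
    (h0 : f 0 ≤ c) {m : ℕ} (hm : c < f m) : ∃ k < m, f k ≤ c ∧ c < f (k + 1) := by
  induction m with
  | zero => exact absurd hm h0.not_gt
  | succ m ih =>
    by_cases hcm : c < f m
    · obtain ⟨k, hkm, hk⟩ := ih hcm
      exact ⟨k, by omega, hk⟩
    · exact ⟨m, by omega, not_lt.1 hcm, hm⟩

section LinearOrder

variable {α : Type*} [Fintype α] [LinearOrder α] [LocallyFiniteOrderBot α]
  [LocallyFiniteOrderTop α]

theorem Finset.Iio_union_singleton_union_Ioi (a : α) : Iio a ∪ {a} ∪ Ioi a = univ := by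
  ext b
  simpa using le_or_gt b a

theorem Finset.sum_Iic_add_sum_Ioi {M : Type*} [AddCommMonoid M] (f : α → M) (a : α) :
    ∑ b ∈ Iic a, f b + ∑ b ∈ Ioi a, f b = ∑ b, f b := by
  have hdisj : Disjoint (Iic a) (Ioi a) := by
    rw [← disjoint_coe, coe_Iic, coe_Ioi]
    exact Set.Iic_disjoint_Ioi le_rfl
  have hunion : Iic a ∪ Ioi a = univ := by
    ext b
    simpa using le_or_gt b a
  rw [← sum_union hdisj, hunion]

end LinearOrder

namespace Fin

variable {n : ℕ}

theorem filter_val_lt_eq_Iio (j : Fin n) : univ.filter (fun i : Fin n => (i : ℕ) < j) = Iio j := by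
  ext i
  simp only [mem_filter, mem_univ, true_and, mem_Iio, Fin.lt_def]

theorem filter_val_lt_succ_eq_Iic (j : Fin n) :
    univ.filter (fun i : Fin n => (i : ℕ) < j + 1) = Iic j := by
  ext i
  simp only [mem_filter, mem_univ, true_and, mem_Iic, Fin.le_def]
  omega

theorem exists_sum_Iio_le_and_lt_sum_Iic {M : Type*} [AddCommMonoid M] [LinearOrder M]
    (x : Fin n → M) {c : M} (hc : 0 ≤ c) (h : c < ∑ i, x i) :
    ∃ j, ∑ i ∈ Iio j, x i ≤ c ∧ c < ∑ i ∈ Iic j, x i := by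
  set f : ℕ → M := fun k => ∑ i ∈ univ.filter (fun i : Fin n => (i : ℕ) < k), x i
  have hf0 : f 0 ≤ c := by simpa [f] using hc
  have hfn : c < f n := by simpa [f] using h
  obtain ⟨k, hkn, hle, hgt⟩ := Nat.exists_le_and_lt_succ hf0 hfn
  refine ⟨⟨k, hkn⟩, ?_, ?_⟩
  · rwa [← filter_val_lt_eq_Iio]
  · rwa [← filter_val_lt_succ_eq_Iic]

end Fin

theorem stmt_1_general (n : ℕ) (x : Fin n → ℝ)
    (h2 : ∀ i, x i ≤ 1 / 2) (hsum : ∑ i, x i = 1) :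
    ∃ S₁ S₂ S₃ : Finset (Fin n),
      Disjoint S₁ S₂ ∧ Disjoint S₁ S₃ ∧ Disjoint S₂ S₃ ∧
      S₁ ∪ S₂ ∪ S₃ = Finset.univ ∧
      (∑ i ∈ S₁, x i) ≤ 1 / 2 ∧ (∑ i ∈ S₂, x i) ≤ 1 / 2 ∧
      (∑ i ∈ S₃, x i) ≤ 1 / 2 := by
  obtain ⟨j, hIio, hIic⟩ :=
    Fin.exists_sum_Iio_le_and_lt_sum_Iic x (by norm_num : (0 : ℝ) ≤ 1 / 2) (by rw [hsum]; norm_num)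
  have hIoi : ∑ i ∈ Ioi j, x i = 1 - ∑ i ∈ Iic j, x i := by
    rw [← hsum, ← sum_Iic_add_sum_Ioi x j]
    ring
  refine ⟨Iio j, {j}, Ioi j, disjoint_singleton_right.2 (by simp), (disjoint_Ioi_Iio j).symm,
    disjoint_singleton_left.2 (by simp), Iio_union_singleton_union_Ioi j, hIio, ?_, ?_⟩
  · simpa using h2 j
  · linarith

/-- Nonnegative reals each at most 1/2 summing to 1 can be partitioned into
three index sets each of sum at most 1/2. -/
theorem stmt_1 (n : ℕ) (x : Fin n → ℝ)
    (h0 : ∀ i, 0 ≤ x i) (h2 : ∀ i, x i ≤ 1 / 2) (hsum : ∑ i, x i = 1) :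
    ∃ S₁ S₂ S₃ : Finset (Fin n),
      Disjoint S₁ S₂ ∧ Disjoint S₁ S₃ ∧ Disjoint S₂ S₃ ∧
      S₁ ∪ S₂ ∪ S₃ = Finset.univ ∧
      (∑ i ∈ S₁, x i) ≤ 1 / 2 ∧ (∑ i ∈ S₂, x i) ≤ 1 / 2 ∧
      (∑ i ∈ S₃, x i) ≤ 1 / 2 :=
  stmt_1_general n x h2 hsum
end

section
/- Let x_1,...,x_n be positive integers with ∑ x_i ≥ k for a positive integer k. Then there exists a partition of {1,...,n} into nonempty subsets S_1,...,S_m such that every subset satisfies ∑_{i∈S_j} x_i ≥ k, and every subset satisfies ∑_{i∈S_j} x_i ≤ max(k - 1 + max_i x_i, 3k - 3). -/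
/-!
Split off bins one at a time. As long as the remaining items weigh more than the bound `B`,
remove a bin of weight in `[k, B]` that leaves weight at least `k` behind: a single item of
size `≥ k` if there is one (it weighs at most `B - (k - 1)`, so the rest weighs at least `k`),
and otherwise an inclusion-minimal set of weight `≥ k`, which weighs at most `2k - 2` because
dropping any of its items, each of size `≤ k - 1`, brings it below `k`. Once the remaining
weight is at most `B`, the remaining items form the last bin.
-/

open Finset

namespace Finset

variable {α : Type*} [DecidableEq α] {x : α → ℕ} {k B : ℕ} {T : Finset α}

theorem exists_subset_le_sum_le_two_mul_sub_two (hT : k ≤ ∑ i ∈ T, x i)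
    (hsmall : ∀ i ∈ T, x i < k) :
    ∃ S ⊆ T, k ≤ ∑ i ∈ S, x i ∧ ∑ i ∈ S, x i ≤ 2 * k - 2 := by
  obtain ⟨S, hST, hmin⟩ :=
    exists_minimal_le_of_wellFoundedLT (fun S : Finset α ↦ k ≤ ∑ i ∈ S, x i) T hT
  refine ⟨S, hST, hmin.prop, ?_⟩
  obtain rfl | ⟨i, hi⟩ := S.eq_empty_or_nonempty
  · simp_all
  have herase : ∑ j ∈ S.erase i, x j < k :=
    not_le.mp (hmin.not_prop_of_lt (erase_ssubset hi))
  have hxi := hsmall i (hST hi)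
  rw [← add_sum_erase S x hi]
  omega

theorem exists_bin_of_lt_sum (hbig : ∀ i ∈ T, k - 1 + x i ≤ B) (hsmall : 3 * k - 3 ≤ B)
    (hB : B < ∑ i ∈ T, x i) :
    ∃ S ⊆ T, S.Nonempty ∧ k ≤ ∑ i ∈ S, x i ∧ ∑ i ∈ S, x i ≤ B ∧ k ≤ ∑ i ∈ T \ S, x i := by
  by_cases hlarge : ∃ i ∈ T, k ≤ x i
  · obtain ⟨i, hi, hki⟩ := hlarge
    have hrest := sum_sdiff (f := x) (singleton_subset_iff.mpr hi)
    rw [sum_singleton] at hrest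
    have := hbig i hi
    exact ⟨{i}, singleton_subset_iff.mpr hi, singleton_nonempty i, by simpa using hki,
      by simpa using (le_add_self.trans this), by omega⟩
  · push Not at hlarge
    obtain ⟨j, hj⟩ := nonempty_of_sum_ne_zero (s := T) (f := x) (by omega)
    have hxj := hlarge j hj
    obtain ⟨S, hST, hkS, hS⟩ := exists_subset_le_sum_le_two_mul_sub_two (by omega) hlarge
    have hrest := sum_sdiff (f := x) hST
    exact ⟨S, hST, nonempty_of_sum_ne_zero (s := S) (f := x) (by omega), hkS, by omega, by omega⟩

theorem exists_finpartition_le_sum_le (hT : k ≤ ∑ i ∈ T, x i) (hbig : ∀ i ∈ T, k - 1 + x i ≤ B)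
    (hsmall : 3 * k - 3 ≤ B) :
    ∃ P : Finpartition T, ∀ S ∈ P.parts, k ≤ ∑ i ∈ S, x i ∧ ∑ i ∈ S, x i ≤ B := by
  induction T using strongInduction with
  | H T ih =>
  by_cases hTB : ∑ i ∈ T, x i ≤ B
  · refine ⟨.ofErase {T} (supIndep_singleton _ _) (sup_singleton ..), fun S hS ↦ ?_⟩
    obtain rfl := mem_singleton.mp (mem_of_mem_erase hS)
    exact ⟨hT, hTB⟩
  obtain ⟨S, hST, hS, hkS, hSB, hkrest⟩ := exists_bin_of_lt_sum hbig hsmall (not_le.mp hTB)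
  obtain ⟨P, hP⟩ := ih (T \ S) (sdiff_ssubset hST hS) hkrest fun i hi ↦ hbig i (sdiff_subset hi)
  refine ⟨P.extend hS.ne_empty sdiff_disjoint (sdiff_union_of_subset hST), fun U hU ↦ ?_⟩
  rw [Finpartition.extend_parts, mem_insert] at hU
  rcases hU with rfl | hU
  · exact ⟨hkS, hSB⟩
  · exact hP U hU

end Finset

theorem stmt_2_general (n k : ℕ) (x : Fin n → ℕ)
    (hsum : k ≤ ∑ i, x i) :
    ∃ P : Finpartition (Finset.univ : Finset (Fin n)),
      ∀ S ∈ P.parts, (k ≤ ∑ i ∈ S, x i) ∧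
        (∑ i ∈ S, x i ≤ max (k - 1 + Finset.univ.sup x) (3 * k - 3)) :=
  exists_finpartition_le_sum_le hsum
    (fun i _ ↦ (Nat.add_le_add_left (le_sup (mem_univ i)) _).trans (le_max_left ..))
    (le_max_right ..)

/-- Min-Max Bin Covering: existence of a feasible packing with cost at most
`max (k - 1 + max_i x_i) (3k - 3)` (Next Fit guarantee). -/
theorem stmt_2 (n k : ℕ) (x : Fin n → ℕ) (hx : ∀ i, 0 < x i)
    (hk : 0 < k) (hsum : k ≤ ∑ i, x i) :
    ∃ P : Finpartition (Finset.univ : Finset (Fin n)),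
      ∀ S ∈ P.parts, (k ≤ ∑ i ∈ S, x i) ∧
        (∑ i ∈ S, x i ≤ max (k - 1 + Finset.univ.sup x) (3 * k - 3)) :=
  stmt_2_general n k x hsum
end

section
/- Let T be a finite tree with nonnegative integer vertex weights and maximum degree d, and let k be a positive integer. Suppose no edge e of T has the property that both components of T − e have total weight at least k. Then the total weight of T is at most κ + d(k−1), where κ = max(k, maximum vertex weight in T). -/
/-!
Some vertex `u` has all its branches (the components of `T - u`) of weight less than `k`:
if some directed edge `(u, v)` has a `u`-side of weight at least `k`, take one whose `u`-side
has fewest vertices. The `v`-side of `uv` is then light, since `uv` does not split `T`, and for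
every other neighbour `x` of `u` the `x`-side of `xu` is a proper subset of the `u`-side of
`(u, v)`, hence light by minimality. The weight of `T` is `w u` plus the weights of the at most
`d` branches at `u`, each at most `k - 1`.
-/

open scoped Classical in
/-- The weight of the component containing `u` after deleting edge `s(u,v)`. -/
noncomputable def sideWeight {V : Type*} [Fintype V] (G : SimpleGraph V)
    (w : V → ℕ) (u v : V) : ℕ :=
  ∑ a ∈ Finset.univ.filter
      (fun a => (G.deleteEdges {s(u, v)}).Reachable u a), w a

open scoped Classical in
noncomputable def side {V : Type*} [Fintype V] (G : SimpleGraph V) (u v : V) : Finset V :=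
  Finset.univ.filter fun a => (G.deleteEdges {s(u, v)}).Reachable u a

lemma sideWeight_eq_sum_side {V : Type*} [Fintype V] (G : SimpleGraph V) (w : V → ℕ)
    (u v : V) : sideWeight G w u v = ∑ a ∈ side G u v, w a := rfl

lemma mem_side {V : Type*} [Fintype V] {G : SimpleGraph V} {u v a : V} :
    a ∈ side G u v ↔ (G.deleteEdges {s(u, v)}).Reachable u a := by
  classical
  simp [side]

namespace SimpleGraph

variable {V : Type*} {G : SimpleGraph V}

lemma adj_deleteEdges_of_ne {u v x : V} (hux : G.Adj u x) (hxv : x ≠ v) :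
    (G.deleteEdges {s(u, v)}).Adj u x := by
  simp [deleteEdges_adj, hux, hxv, hux.ne']

lemma reachable_deleteEdges_of_notMem_support {a b : V} (p : G.Walk a b) {u : V}
    (hu : u ∉ p.support) (v : V) : (G.deleteEdges {s(u, v)}).Reachable a b :=
  ⟨p.toDeleteEdges _ fun e he hev => hu <| by
    rw [Set.mem_singleton_iff.mp hev] at he
    exact p.fst_mem_support_of_mem_edges he⟩

lemma IsTree.not_reachable_deleteEdges (hT : G.IsTree) {x u : V} (hxu : G.Adj x u) :
    ¬ (G.deleteEdges {s(x, u)}).Reachable x u :=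
  isAcyclic_iff_forall_adj_isBridge.mp hT.isAcyclic hxu

lemma IsTree.notMem_support_of_walk_deleteEdges (hT : G.IsTree) {x u a : V}
    (hxu : G.Adj x u) (p : (G.deleteEdges {s(x, u)}).Walk x a) : u ∉ p.support := by
  classical
  exact fun hu => hT.not_reachable_deleteEdges hxu ⟨p.takeUntil u hu⟩

/-- A walk from `x` that avoids the edge `xu` never passes through `u`, so it avoids
every edge at `u`. -/
lemma IsTree.reachable_deleteEdges_of_reachable (hT : G.IsTree) {x u a : V}
    (hxu : G.Adj x u) (h : (G.deleteEdges {s(x, u)}).Reachable x a) (v : V) :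
    (G.deleteEdges {s(u, v)}).Reachable x a := by
  obtain ⟨p⟩ := h
  refine reachable_deleteEdges_of_notMem_support (p.mapLe (G.deleteEdges_le _)) ?_ v
  rw [Walk.support_mapLe_eq_support]
  exact hT.notMem_support_of_walk_deleteEdges hxu p

lemma IsTree.exists_adj_reachable_deleteEdges (hT : G.IsTree) {u a : V} (hau : a ≠ u) :
    ∃ x, G.Adj u x ∧ (G.deleteEdges {s(x, u)}).Reachable x a := by
  classical
  obtain ⟨p, hp⟩ := (hT.connected.preconnected u a).some.toPath
  cases p with
  | nil => exact absurd rfl hau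
  | @cons _ x _ hux q =>
    rw [Walk.cons_isPath_iff] at hp
    refine ⟨x, hux, ?_⟩
    rw [Sym2.eq_swap]
    exact reachable_deleteEdges_of_notMem_support q hp.2 x

lemma IsTree.side_ssubset (hT : G.IsTree) [Fintype V] {u v x : V} (hux : G.Adj u x)
    (hxv : x ≠ v) : side G x u ⊂ side G u v := by
  refine Finset.ssubset_iff_of_subset (fun a ha => ?_) |>.mpr
    ⟨u, mem_side.mpr .rfl, fun hu => hT.not_reachable_deleteEdges hux.symm (mem_side.mp hu)⟩
  exact mem_side.mpr <| (adj_deleteEdges_of_ne hux hxv).reachable.trans <|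
    hT.reachable_deleteEdges_of_reachable hux.symm (mem_side.mp ha) v

lemma IsTree.disjoint_side (hT : G.IsTree) [Fintype V] {u x y : V} (hux : G.Adj u x)
    (huy : G.Adj u y) (hxy : x ≠ y) : Disjoint (side G x u) (side G y u) := by
  refine Finset.disjoint_left.mpr fun a hax hay => hT.not_reachable_deleteEdges hux.symm ?_
  have hyu : (G.deleteEdges {s(x, u)}).Adj y u := by
    rw [Sym2.eq_swap]
    exact (adj_deleteEdges_of_ne huy hxy.symm).symm
  have hay' := hT.reachable_deleteEdges_of_reachable huy.symm (mem_side.mp hay) x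
  rw [Sym2.eq_swap] at hay'
  exact (mem_side.mp hax).trans (hay'.symm.trans hyu.reachable)

lemma IsTree.sum_eq_add_sum_sideWeight (hT : G.IsTree) [Fintype V] [DecidableRel G.Adj]
    (w : V → ℕ) (u : V) :
    ∑ v, w v = w u + ∑ x ∈ G.neighborFinset u, sideWeight G w x u := by
  classical
  have hu : u ∉ (G.neighborFinset u).biUnion (side G · u) := by
    simp only [Finset.mem_biUnion, mem_neighborFinset, not_exists, not_and]
    exact fun x hux hu => hT.not_reachable_deleteEdges hux.symm (mem_side.mp hu)
  have huniv : Finset.univ = insert u ((G.neighborFinset u).biUnion (side G · u)) := by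
    refine (Finset.eq_univ_of_forall fun a => ?_).symm
    rcases eq_or_ne a u with rfl | hau
    · exact Finset.mem_insert_self _ _
    obtain ⟨x, hux, hx⟩ := hT.exists_adj_reachable_deleteEdges hau
    exact Finset.mem_insert_of_mem <|
      Finset.mem_biUnion.mpr ⟨x, (mem_neighborFinset ..).mpr hux, mem_side.mpr hx⟩
  rw [huniv, Finset.sum_insert hu, Finset.sum_biUnion]
  · simp only [sideWeight_eq_sum_side]
  · intro x hx y hy hxy
    exact hT.disjoint_side ((mem_neighborFinset ..).mp hx) ((mem_neighborFinset ..).mp hy) hxy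

lemma IsTree.exists_forall_sideWeight_lt (hT : G.IsTree) [Fintype V] (w : V → ℕ) (k : ℕ)
    (hnosplit : ∀ u v, G.Adj u v → ¬ (k ≤ sideWeight G w u v ∧ k ≤ sideWeight G w v u)) :
    ∃ u, ∀ x, G.Adj u x → sideWeight G w x u < k := by
  classical
  set heavy := Finset.univ.filter fun e : V × V => G.Adj e.1 e.2 ∧ k ≤ sideWeight G w e.1 e.2
  rcases heavy.eq_empty_or_nonempty with hempty | hne
  · obtain ⟨u⟩ := hT.connected.nonempty
    refine ⟨u, fun x hux => not_le.mp fun hk => ?_⟩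
    have hxu : (x, u) ∈ heavy := by simp [heavy, hux.symm, hk]
    simp [hempty] at hxu
  obtain ⟨⟨u, v⟩, huv, hmin⟩ := heavy.exists_min_image (fun e => (side G e.1 e.2).card) hne
  simp only [heavy, Finset.mem_filter, Finset.mem_univ, true_and] at huv hmin
  refine ⟨u, fun x hux => not_le.mp fun hk => ?_⟩
  rcases eq_or_ne x v with rfl | hxv
  · exact hnosplit u x huv.1 ⟨huv.2, hk⟩
  · exact (Finset.card_lt_card (hT.side_ssubset hux hxv)).not_ge
      (hmin (x, u) ⟨hux.symm, hk⟩)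

end SimpleGraph

theorem stmt_4_general {V : Type*} [Fintype V] (G : SimpleGraph V) [DecidableRel G.Adj]
    (hT : G.IsTree) (w : V → ℕ) (d k : ℕ)
    (hdeg : ∀ v, G.degree v ≤ d)
    (hnosplit : ∀ u v, G.Adj u v →
      ¬ (k ≤ sideWeight G w u v ∧ k ≤ sideWeight G w v u)) :
    ∑ v, w v ≤ max k (Finset.univ.sup w) + d * (k - 1) := by
  obtain ⟨u, hu⟩ := hT.exists_forall_sideWeight_lt w k hnosplit
  rw [hT.sum_eq_add_sum_sideWeight w u]
  have hwu : w u ≤ max k (Finset.univ.sup w) :=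
    (Finset.le_sup (Finset.mem_univ u)).trans (le_max_right _ _)
  have hsides : ∑ x ∈ G.neighborFinset u, sideWeight G w x u ≤ d * (k - 1) :=
    calc ∑ x ∈ G.neighborFinset u, sideWeight G w x u
        ≤ (G.neighborFinset u).card * (k - 1) :=
          Finset.sum_le_card_nsmul _ _ _ fun x hx =>
            Nat.le_sub_one_of_lt (hu x ((SimpleGraph.mem_neighborFinset ..).mp hx))
      _ ≤ d * (k - 1) := by
          rw [SimpleGraph.card_neighborFinset_eq_degree]
          exact Nat.mul_le_mul_right _ (hdeg u)
  exact add_le_add hwu hsides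

/-- If no edge of the weighted tree `T` splits it into two parts each of weight
at least `k`, then the total weight is at most `κ + d(k-1)` where `d` bounds
the degrees and `κ = max k (max vertex weight)`. -/
theorem stmt_4 {V : Type*} [Fintype V] (G : SimpleGraph V) [DecidableRel G.Adj]
    (hT : G.IsTree) (w : V → ℕ) (d k : ℕ) (hk : 0 < k)
    (hdeg : ∀ v, G.degree v ≤ d)
    (hnosplit : ∀ u v, G.Adj u v →
      ¬ (k ≤ sideWeight G w u v ∧ k ≤ sideWeight G w v u)) :
    ∑ v, w v ≤ max k (Finset.univ.sup w) + d * (k - 1) :=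
  stmt_4_general G hT w d k hdeg hnosplit
end

section
/- Let x_1,...,x_n be positive integers and k a positive integer with ∑ x_i ≥ k. If a feasible partition for Min-Max Bin Covering exists in which the items of the last bin of the Next Fit packing (processed in decreasing order) all have size at most k/2 and total size less than k, and at least 4 bins were formed, then there exists a feasible partition with cost at most (5/2)·max(k, max_i x_i). -/
/-!
Next Fit leaves at least three complete bins, each of level in `[k, 2k)`. The last, incomplete
bin has level `< k` and items of size `≤ k/2`, so it splits into three groups of size `≤ k/2`
each: take a greedy prefix up to `k/2`, then the item crossing `k/2`, then the rest, which has
size `< k - k/2`. Adding one group to each of three complete bins gives a feasible partition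
whose bins have level `< 2k + k/2`.
-/

open Finset

variable {α : Type*}

section Splitting

variable [DecidableEq α] (x : α → ℕ) (k : ℕ)

theorem exists_subset_sum_le_lt_add (S : Finset α) (hS : k < 2 * ∑ i ∈ S, x i) :
    ∃ A ⊆ S, ∃ y ∈ S, y ∉ A ∧ 2 * ∑ i ∈ A, x i ≤ k ∧ k < 2 * (∑ i ∈ A, x i + x y) := by
  induction S using Finset.induction_on with
  | empty => simp at hS
  | @insert a s ha ih =>
    rw [sum_insert ha] at hS
    by_cases hs : 2 * ∑ i ∈ s, x i ≤ k
    · exact ⟨s, subset_insert _ _, a, mem_insert_self _ _, ha, hs, by omega⟩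
    · obtain ⟨A, hAs, y, hys, hyA, hA, hAy⟩ := ih (by omega)
      exact ⟨A, hAs.trans (subset_insert _ _), y, mem_insert_of_mem hys, hyA, hA, hAy⟩

theorem exists_split_three_of_sum_lt (L : Finset α) (hL : ∑ i ∈ L, x i < k)
    (hxL : ∀ i ∈ L, 2 * x i ≤ k) :
    ∃ Q : List (Finset α), Q.length = 3 ∧ Q.Pairwise Disjoint ∧
      (∀ i, i ∈ L ↔ ∃ q ∈ Q, i ∈ q) ∧ ∀ q ∈ Q, 2 * ∑ i ∈ q, x i ≤ k := by
  by_cases hsmall : 2 * ∑ i ∈ L, x i ≤ k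
  · refine ⟨[L, ∅, ∅], rfl, by simp, by simp, by simpa using hsmall⟩
  -- a greedy prefix `A` followed by the item `y` that pushes it past `k/2`; the rest is then `< k/2`
  obtain ⟨A, hAL, y, hyL, hyA, hA, hAy⟩ := exists_subset_sum_le_lt_add x k L (by omega)
  have hrest : ∑ i ∈ (L \ A).erase y, x i + x y + ∑ i ∈ A, x i = ∑ i ∈ L, x i := by
    rw [sum_erase_add _ _ (mem_sdiff.2 ⟨hyL, hyA⟩), sum_sdiff hAL]
  refine ⟨[A, {y}, (L \ A).erase y], rfl, ?_, fun i => ?_, ?_⟩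
  · simp [hyA, (disjoint_sdiff (s := A) (t := L)).mono_right (erase_subset _ _)]
  · by_cases hiA : i ∈ A <;> by_cases hiy : i = y <;> simp [hiA, hiy, hyL]
    exact hAL hiA
  · simp only [List.mem_cons, List.not_mem_nil, or_false, forall_eq_or_imp, forall_eq,
      sum_singleton]
    exact ⟨hA, hxL y hyL, by omega⟩

theorem exists_split_of_sum_lt (L : Finset α) (hL : ∑ i ∈ L, x i < k)
    (hxL : ∀ i ∈ L, 2 * x i ≤ k) {m : ℕ} (hm : 3 ≤ m) :
    ∃ Q : List (Finset α), Q.length = m ∧ Q.Pairwise Disjoint ∧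
      (∀ i, i ∈ L ↔ ∃ q ∈ Q, i ∈ q) ∧ ∀ q ∈ Q, 2 * ∑ i ∈ q, x i ≤ k := by
  obtain ⟨Q, hlen, hdisj, hcover, hsum⟩ := exists_split_three_of_sum_lt x k L hL hxL
  refine ⟨Q ++ List.replicate (m - 3) ∅, by simp; omega, ?_, fun i => ?_, ?_⟩
  · simp [List.pairwise_append, hdisj, List.pairwise_replicate, List.mem_replicate]
  · simp [hcover, List.mem_replicate, or_and_right, exists_or]
  · simp only [List.mem_append, List.mem_replicate]
    rintro q (hq | ⟨-, rfl⟩)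
    exacts [hsum q hq, by simp]

end Splitting

theorem pairwise_disjoint_append_of_forall_subset {D Q : List (Finset α)} {L : Finset α}
    (hDL : (D ++ [L]).Pairwise Disjoint) (hQ : Q.Pairwise Disjoint) (hQL : ∀ q ∈ Q, q ⊆ L) :
    (D ++ Q).Pairwise Disjoint := by
  rw [List.pairwise_append] at hDL ⊢
  exact ⟨hDL.1, hQ, fun d hd q hq =>
    (hDL.2.2 d hd L (List.mem_singleton_self L)).mono_right (hQL q hq)⟩

section Redistribution

variable [DecidableEq α]

theorem exists_eq_union_of_mem_zipWith_union {D Q : List (Finset α)} {S : Finset α}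
    (hS : S ∈ List.zipWith (· ∪ ·) D Q) : ∃ d ∈ D, ∃ q ∈ Q, S = d ∪ q := by
  induction D generalizing Q with
  | nil => simp at hS
  | cons d D ih =>
    cases Q with
    | nil => simp at hS
    | cons q Q =>
      rcases List.mem_cons.1 hS with rfl | hS
      · exact ⟨d, List.mem_cons_self, q, List.mem_cons_self, rfl⟩
      · obtain ⟨d', hd', q', hq', rfl⟩ := ih hS
        exact ⟨d', List.mem_cons_of_mem _ hd', q', List.mem_cons_of_mem _ hq', rfl⟩

theorem pairwise_disjoint_zipWith_union {D Q : List (Finset α)}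
    (h : (D ++ Q).Pairwise Disjoint) : (List.zipWith (· ∪ ·) D Q).Pairwise Disjoint := by
  induction D generalizing Q with
  | nil => simp
  | cons d D ih =>
    cases Q with
    | nil => simp
    | cons q Q =>
      have hDQ : (D ++ Q).Pairwise Disjoint := h.sublist (by simp)
      simp only [List.cons_append, List.pairwise_cons, List.pairwise_append, List.mem_append,
        List.mem_cons] at h
      obtain ⟨hd, -, ⟨hq, -⟩, hDq⟩ := h
      refine List.pairwise_cons.2 ⟨fun S hS => ?_, ih hDQ⟩
      obtain ⟨d', hd', q', hq', rfl⟩ := exists_eq_union_of_mem_zipWith_union hS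
      simp only [disjoint_union_left, disjoint_union_right]
      exact ⟨⟨hd d' (by simp [hd']), (hDq d' hd' q (by simp)).symm⟩,
        ⟨hd q' (by simp [hq']), hq q' hq'⟩⟩

theorem exists_mem_zipWith_union_iff {D Q : List (Finset α)} (hlen : D.length = Q.length)
    (i : α) : (∃ S ∈ List.zipWith (· ∪ ·) D Q, i ∈ S) ↔ ∃ S ∈ D ++ Q, i ∈ S := by
  induction D generalizing Q with
  | nil => cases Q <;> simp_all
  | cons d D ih =>
    cases Q with
    | nil => simp at hlen
    | cons q Q =>
      have := ih (Nat.succ_injective hlen)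
      simp only [List.mem_append] at this
      simp only [List.zipWith_cons_cons, List.cons_append, List.mem_cons, List.mem_append,
        or_and_right, exists_or, exists_eq_left, mem_union, this]
      simp only [or_assoc, or_left_comm]

end Redistribution

theorem exists_finpartition_of_pairwise_disjoint [DecidableEq α] [Fintype α] {l : List (Finset α)}
    (hl : l.Pairwise Disjoint) (hcover : ∀ i, ∃ S ∈ l, i ∈ S) :
    ∃ P : Finpartition (univ : Finset α), ∀ S ∈ P.parts, S ∈ l := by
  have : Std.Symm (α := Finset α) Disjoint := ⟨fun _ _ h => h.symm⟩
  refine ⟨Finpartition.ofErase l.toFinset ?_ ?_, fun S hS => ?_⟩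
  · rw [supIndep_iff_pairwiseDisjoint]
    intro a ha b hb hab
    exact hl.forall (List.mem_toFinset.1 ha) (List.mem_toFinset.1 hb) hab
  · refine eq_univ_of_forall fun i => ?_
    obtain ⟨S, hS, hiS⟩ := hcover i
    exact mem_sup.2 ⟨S, List.mem_toFinset.2 hS, hiS⟩
  · exact List.mem_toFinset.1 (mem_of_mem_erase hS)

theorem stmt_9_general (n k : ℕ) (x : Fin n → ℕ)
    (B : List (Finset (Fin n)))
    (hlen : 4 ≤ B.length)
    (hdisj : B.Pairwise Disjoint)
    (hcover : ∀ i : Fin n, ∃ S ∈ B, i ∈ S)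
    (hfull : ∀ S ∈ B.dropLast, (k ≤ ∑ i ∈ S, x i) ∧ (∑ i ∈ S, x i < 2 * k))
    (hlast : ∀ S ∈ B.getLast?,
      (∑ i ∈ S, x i < k) ∧ ∀ i ∈ S, 2 * x i ≤ k) :
    ∃ P : Finpartition (Finset.univ : Finset (Fin n)),
      (∀ S ∈ P.parts, k ≤ ∑ i ∈ S, x i) ∧
      ∀ S ∈ P.parts, 2 * (∑ i ∈ S, x i) ≤ 5 * max k (Finset.univ.sup x) := by
  have hB : B ≠ [] := List.ne_nil_of_length_pos (by omega)
  set D := B.dropLast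
  set L := B.getLast hB
  have hDL : B = D ++ [L] := (List.dropLast_append_getLast hB).symm
  obtain ⟨hLsum, hLitems⟩ := hlast L (by simp [L, List.getLast?_eq_some_getLast hB])
  -- split `L` into `D.length` groups (all but three empty) and add the `j`-th to the `j`-th bin
  obtain ⟨Q, hQlen, hQdisj, hQcover, hQsum⟩ :=
    exists_split_of_sum_lt x k L hLsum hLitems (m := D.length) (by simp [D]; omega)
  have hDQ : (D ++ Q).Pairwise Disjoint := pairwise_disjoint_append_of_forall_subset
    (hDL ▸ hdisj) hQdisj fun q hq i hi => (hQcover i).2 ⟨q, hq, hi⟩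
  obtain ⟨P, hP⟩ := exists_finpartition_of_pairwise_disjoint (pairwise_disjoint_zipWith_union hDQ)
    fun i => (exists_mem_zipWith_union_iff hQlen.symm i).2 <| by
      simpa [hDL, hQcover, or_and_right, exists_or] using hcover i
  have hbin : ∀ S ∈ P.parts, k ≤ ∑ i ∈ S, x i ∧ 2 * (∑ i ∈ S, x i) < 5 * k := by
    intro S hS
    obtain ⟨d, hd, q, hq, rfl⟩ := exists_eq_union_of_mem_zipWith_union (hP S hS)
    rw [sum_union ((List.pairwise_append.1 hDQ).2.2 d hd q hq)]
    have hdsum := hfull d hd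
    have hqsum := hQsum q hq
    omega
  refine ⟨P, fun S hS => (hbin S hS).1, fun S hS => ?_⟩
  have hkmax := le_max_left k (univ.sup x)
  have hSsum := (hbin S hS).2
  omega

/-- If Next Fit (in decreasing order) on a Min-Max Bin Covering instance has
formed at least 4 bins, all complete bins having level in `[k, 2k)`, and the
last bin has total size `< k` with all its items of size at most `k/2`, then
there is a feasible partition of cost at most `(5/2)·max k (max_i x_i)`. -/
theorem stmt_9 (n k : ℕ) (x : Fin n → ℕ) (hx : ∀ i, 0 < x i) (hk : 0 < k)
    (hsum : k ≤ ∑ i, x i)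
    (B : List (Finset (Fin n)))
    (hlen : 4 ≤ B.length)
    (hdisj : B.Pairwise Disjoint)
    (hcover : ∀ i : Fin n, ∃ S ∈ B, i ∈ S)
    (hfull : ∀ S ∈ B.dropLast, (k ≤ ∑ i ∈ S, x i) ∧ (∑ i ∈ S, x i < 2 * k))
    (hlast : ∀ S ∈ B.getLast?,
      (∑ i ∈ S, x i < k) ∧ ∀ i ∈ S, 2 * x i ≤ k) :
    ∃ P : Finpartition (Finset.univ : Finset (Fin n)),
      (∀ S ∈ P.parts, k ≤ ∑ i ∈ S, x i) ∧
      ∀ S ∈ P.parts, 2 * (∑ i ∈ S, x i) ≤ 5 * max k (Finset.univ.sup x) :=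
  stmt_9_general n k x B hlen hdisj hcover hfull hlast
end

section
/- Suppose each bin in a packing contains either zero or exactly two items of size in (k/2, k), except possibly the last bin which contains one such item. If the total number of items of size in (k/2,k) is odd, then any feasible packing of the same items where every bin total is in [k, 6k/5] must have some bin containing at least three items of size in (k/2,k); consequently the optimum cost of the instance is at least 3k/2. -/
/-!
A covered bin holding at most one large item would weigh less than `k`: its small items weigh at
most the total `r` of all small items, and `x i + r < k` for every large item `x i`. So if no bin
of a feasible packing held three large items, every bin would hold exactly two, and the number of
large items would be even. A bin with three large items weighs more than `3k/2`.
-/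

open Finset

theorem Finpartition.card_filter_eq_sum_card_filter {ι : Type*} [DecidableEq ι] {s : Finset ι}
    (P : Finpartition s) (p : ι → Prop) [DecidablePred p] :
    #(s.filter p) = ∑ S ∈ P.parts, #(S.filter p) := by
  conv_lhs => rw [← P.biUnion_parts, filter_biUnion]
  rw [card_biUnion]
  · rfl
  · exact fun S hS T hT hST => disjoint_filter_filter (P.disjoint hS hT hST)

theorem Finpartition.even_card_filter {ι : Type*} [DecidableEq ι] {s : Finset ι}
    (P : Finpartition s) (p : ι → Prop) [DecidablePred p]
    (h : ∀ S ∈ P.parts, Even #(S.filter p)) : Even #(s.filter p) := by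
  rw [P.card_filter_eq_sum_card_filter p]
  exact even_sum _ h

section Bins

variable {ι : Type*} {S : Finset ι} {x : ι → ℝ}

theorem two_le_card_filter_lt_of_le_sum {c k r : ℝ}
    (hsmall : ∑ i ∈ S.filter (x · ≤ c), x i ≤ r) (hrk : r < k)
    (hlarge : ∀ i ∈ S, c < x i → x i + r < k) (hS : k ≤ ∑ i ∈ S, x i) :
    2 ≤ #(S.filter (c < x ·)) := by
  have hsplit : ∑ i ∈ S, x i = ∑ i ∈ S.filter (c < x ·), x i + ∑ i ∈ S.filter (x · ≤ c), x i := by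
    simp only [← not_lt, sum_filter_add_sum_filter_not]
  by_contra! hlt
  obtain h0 | h1 : #(S.filter (c < x ·)) = 0 ∨ #(S.filter (c < x ·)) = 1 := by omega
  · rw [card_eq_zero.mp h0, sum_empty] at hsplit
    linarith
  · obtain ⟨i, hi⟩ := card_eq_one.mp h1
    have hiS : i ∈ S.filter (c < x ·) := hi ▸ mem_singleton_self i
    rw [hi, sum_singleton] at hsplit
    linarith [hlarge i (mem_filter.mp hiS).1 (mem_filter.mp hiS).2]

theorem card_filter_lt_mul_le_sum (hx : ∀ i ∈ S, 0 ≤ x i) (c : ℝ) :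
    #(S.filter (c < x ·)) * c ≤ ∑ i ∈ S, x i :=
  calc #(S.filter (c < x ·)) * c = ∑ _ ∈ S.filter (c < x ·), c := by rw [sum_const, nsmul_eq_mul]
    _ ≤ ∑ i ∈ S.filter (c < x ·), x i := sum_le_sum fun i hi => (mem_filter.mp hi).2.le
    _ ≤ ∑ i ∈ S, x i := sum_le_sum_of_subset_of_nonneg (filter_subset _ _) fun i hi _ => hx i hi

end Bins

open scoped Classical in
theorem stmt_12_general (n : ℕ) (k : ℝ) (x : Fin n → ℝ) (hk : 0 < k)
    (hx : ∀ i, 0 < x i)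
    (hodd : Odd (Finset.univ.filter (fun i => k / 2 < x i)).card)
    (hsmall : (∑ j ∈ Finset.univ.filter (fun j => x j ≤ k / 2), x j) < k / 2)
    (hbig : ∀ i, k / 2 < x i →
      x i + (∑ j ∈ Finset.univ.filter (fun j => x j ≤ k / 2), x j) < k) :
    (∀ P : Finpartition (Finset.univ : Finset (Fin n)),
        (∀ S ∈ P.parts, k ≤ ∑ i ∈ S, x i) →
        (∀ S ∈ P.parts, ∑ i ∈ S, x i ≤ 6 * k / 5) →
        ∃ S ∈ P.parts, 3 ≤ (S.filter (fun i => k / 2 < x i)).card) ∧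
    ∀ P : Finpartition (Finset.univ : Finset (Fin n)),
      (∀ S ∈ P.parts, k ≤ ∑ i ∈ S, x i) →
      ∃ S ∈ P.parts, 3 * k / 2 ≤ ∑ i ∈ S, x i := by
  have three_le : ∀ P : Finpartition (univ : Finset (Fin n)), (∀ S ∈ P.parts, k ≤ ∑ i ∈ S, x i) →
      ∃ S ∈ P.parts, 3 ≤ #(S.filter (k / 2 < x ·)) := by
    intro P hfeas
    by_contra! hle
    refine Nat.not_even_iff_odd.mpr hodd (P.even_card_filter _ fun S hS => ⟨1, ?_⟩)
    have hsmallS : ∑ i ∈ S.filter (x · ≤ k / 2), x i ≤ ∑ j ∈ univ.filter (x · ≤ k / 2), x j :=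
      sum_le_sum_of_subset_of_nonneg (filter_subset_filter _ (subset_univ S))
        fun i _ _ => (hx i).le
    have := two_le_card_filter_lt_of_le_sum hsmallS (by linarith) (fun i _ => hbig i) (hfeas S hS)
    specialize hle S hS
    omega
  refine ⟨fun P hfeas _ => three_le P hfeas, fun P hfeas => ?_⟩
  obtain ⟨S, hS, h3⟩ := three_le P hfeas
  refine ⟨S, hS, ?_⟩
  have h3' : (3 : ℝ) ≤ #(S.filter (k / 2 < x ·)) := by exact_mod_cast h3
  nlinarith [card_filter_lt_mul_le_sum (fun i _ => (hx i).le) (k / 2) (S := S)]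

open scoped Classical in
/-- With all items of size `< k`, an odd number of large items (size in
`(k/2, k)`), small items (size `≤ k/2`) of total `r < k/2`, and every large
item `x i` satisfying `x i + r < k`: every feasible packing with all bins at
most `6k/5` has a bin with at least three large items, and consequently every
feasible packing has a bin of level at least `3k/2` (so the optimum is at
least `3k/2`). -/
theorem stmt_12 (n : ℕ) (k : ℝ) (x : Fin n → ℝ) (hk : 0 < k)
    (hx : ∀ i, 0 < x i) (hxk : ∀ i, x i < k)
    (hodd : Odd (Finset.univ.filter (fun i => k / 2 < x i)).card)
    (hsmall : (∑ j ∈ Finset.univ.filter (fun j => x j ≤ k / 2), x j) < k / 2)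
    (hbig : ∀ i, k / 2 < x i →
      x i + (∑ j ∈ Finset.univ.filter (fun j => x j ≤ k / 2), x j) < k) :
    (∀ P : Finpartition (Finset.univ : Finset (Fin n)),
        (∀ S ∈ P.parts, k ≤ ∑ i ∈ S, x i) →
        (∀ S ∈ P.parts, ∑ i ∈ S, x i ≤ 6 * k / 5) →
        ∃ S ∈ P.parts, 3 ≤ (S.filter (fun i => k / 2 < x i)).card) ∧
    ∀ P : Finpartition (Finset.univ : Finset (Fin n)),
      (∀ S ∈ P.parts, k ≤ ∑ i ∈ S, x i) →
      ∃ S ∈ P.parts, 3 * k / 2 ≤ ∑ i ∈ S, x i :=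
  stmt_12_general n k x hk hx hodd hsmall hbig
end

section
/- Let x_1,...,x_n be positive reals each at most 1 (scaled so k=1), with ∑ x_i ≥ 1. Given any collection of bins with total contents equal to the full item set, where the maximum bin level is M ≥ 1 and at least one bin has level ≥ 1, repeatedly merging the two lowest-level bins while some bin has level < 1 terminates in a packing where every bin has level in [1, max(2, M + 1)). -/
/-!
While some bin is below level 1, some bin `d` has level in `[1, M]`. Of the two bins merged, one
is below 1 and the other is `d`, at most `d`, or below 1, so the new bin stays below `M + 1`.
If `d` itself is merged then every bin is at least `d`, so the procedure stops. Each merge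
removes a bin, so the procedure terminates.
-/

/-- One step of the merging procedure: provided some bin has level `< 1`,
replace the two lowest-level bins by their union. -/
def MergeStep (s t : Multiset (Multiset ℝ)) : Prop :=
  (∃ b ∈ s, Multiset.sum b < 1) ∧
  ∃ (u : Multiset (Multiset ℝ)) (a b : Multiset ℝ),
    s = a ::ₘ b ::ₘ u ∧ t = (a + b) ::ₘ u ∧
    ∀ c ∈ u, Multiset.sum a ≤ Multiset.sum c ∧
      Multiset.sum b ≤ Multiset.sum c

theorem Multiset.exists_two_min_image {α R : Type*} [LinearOrder R] (f : α → R)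
    {s : Multiset α} (hs : 2 ≤ Multiset.card s) :
    ∃ a b u, s = a ::ₘ b ::ₘ u ∧ ∀ c ∈ u, f a ≤ f c ∧ f b ≤ f c := by
  obtain ⟨a, ha, ha_min⟩ := Multiset.exists_min_image f (s := s) (by rintro rfl; simp at hs)
  obtain ⟨s', rfl⟩ := Multiset.exists_cons_of_mem ha
  obtain ⟨b, hb, hb_min⟩ := Multiset.exists_min_image f (s := s') (by rintro rfl; simp at hs)
  obtain ⟨u, rfl⟩ := Multiset.exists_cons_of_mem hb
  exact ⟨a, b, u, rfl, fun c hc => ⟨ha_min c (by simp [hc]), hb_min c (by simp [hc])⟩⟩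

theorem exists_mergeStep {s : Multiset (Multiset ℝ)} (hlow : ∃ c ∈ s, c.sum < 1)
    (hs : 2 ≤ Multiset.card s) : ∃ t, MergeStep s t := by
  obtain ⟨a, b, u, rfl, hmin⟩ := Multiset.exists_two_min_image Multiset.sum hs
  exact ⟨_, hlow, u, a, b, rfl, rfl, hmin⟩

theorem MergeStep.card_add_one {s t : Multiset (Multiset ℝ)} (h : MergeStep s t) :
    Multiset.card t + 1 = Multiset.card s := by
  obtain ⟨-, u, a, b, rfl, rfl, -⟩ := h
  simp

structure MergeInvariant (M : ℝ) (s : Multiset (Multiset ℝ)) : Prop where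
  nonneg : ∀ b ∈ s, 0 ≤ b.sum
  lt : ∀ b ∈ s, b.sum < M + 1
  witness : (∃ c ∈ s, c.sum < 1) → ∃ d ∈ s, 1 ≤ d.sum ∧ d.sum ≤ M

namespace MergeInvariant

variable {M : ℝ} {s t : Multiset (Multiset ℝ)}

theorem two_le_card (hs : MergeInvariant M s) (hlow : ∃ c ∈ s, c.sum < 1) :
    2 ≤ Multiset.card s := by
  obtain ⟨d, hd, hd1, -⟩ := hs.witness hlow
  obtain ⟨c, hc, hc1⟩ := hlow
  obtain ⟨s', rfl⟩ := Multiset.exists_cons_of_mem hc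
  have hd' : d ∈ s' := by
    rcases Multiset.mem_cons.1 hd with rfl | hd'
    · exact absurd hd1 (not_le.2 hc1)
    · exact hd'
  have := Multiset.card_pos_iff_exists_mem.2 ⟨d, hd'⟩
  simp only [Multiset.card_cons]
  omega

theorem mergeStep (hs : MergeInvariant M s) (hst : MergeStep s t) : MergeInvariant M t := by
  obtain ⟨⟨c, hc, hc1⟩, u, a, b, rfl, rfl, hmin⟩ := hst
  obtain ⟨d, hd, hd1, hdM⟩ := hs.witness ⟨c, hc, hc1⟩
  have ha := hs.nonneg a (by simp)
  have hb := hs.nonneg b (by simp)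
  have hlow : a.sum < 1 ∨ b.sum < 1 := by
    rcases Multiset.mem_cons.1 hc with rfl | hc
    · exact .inl hc1
    rcases Multiset.mem_cons.1 hc with rfl | hc
    · exact .inr hc1
    · exact .inl ((hmin c hc).1.trans_lt hc1)
  have hbound : ∀ x ∈ (a + b) ::ₘ u, a.sum ≤ x.sum ∧ b.sum ≤ x.sum := by
    simp only [Multiset.mem_cons, forall_eq_or_imp, Multiset.sum_add]
    exact ⟨⟨by linarith, by linarith⟩, hmin⟩
  have hmerged : a.sum + b.sum < M + 1 := by
    rcases Multiset.mem_cons.1 hd with rfl | hd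
    · rcases hlow with h | h <;> linarith
    rcases Multiset.mem_cons.1 hd with rfl | hd
    · rcases hlow with h | h <;> linarith
    · obtain ⟨had, hbd⟩ := hmin d hd
      rcases hlow with h | h <;> linarith
  refine ⟨fun x hx => ha.trans (hbound x hx).1, fun x hx => ?_, ?_⟩
  · rcases Multiset.mem_cons.1 hx with rfl | hx
    · rwa [Multiset.sum_add]
    · exact hs.lt x (by simp [hx])
  · rintro ⟨x, hx, hx1⟩
    -- if `d` is one of the merged bins, every bin is now at least `d`
    rcases Multiset.mem_cons.1 hd with rfl | hd
    · exact absurd (hd1.trans (hbound x hx).1) (not_le.2 hx1)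
    rcases Multiset.mem_cons.1 hd with rfl | hd
    · exact absurd (hd1.trans (hbound x hx).2) (not_le.2 hx1)
    · exact ⟨d, Multiset.mem_cons_of_mem hd, hd1, hdM⟩

theorem exists_terminal {M : ℝ} {s : Multiset (Multiset ℝ)} (hs : MergeInvariant M s) :
    ∃ t, Relation.ReflTransGen MergeStep s t ∧ (¬ ∃ b ∈ t, b.sum < 1) ∧ MergeInvariant M t := by
  by_cases hlow : ∃ c ∈ s, c.sum < 1
  · obtain ⟨t₁, hstep⟩ := exists_mergeStep hlow (hs.two_le_card hlow)
    obtain ⟨t, ht, hterm, hinv⟩ := (hs.mergeStep hstep).exists_terminal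
    exact ⟨t, .head hstep ht, hterm, hinv⟩
  · exact ⟨s, .refl, hlow, hs⟩
termination_by Multiset.card s
decreasing_by have := hstep.card_add_one; omega

end MergeInvariant

theorem stmt_16_general (bins : Multiset (Multiset ℝ)) (M : ℝ)
    (hitems : ∀ b ∈ bins, ∀ x ∈ b, 0 < x ∧ x ≤ 1)
    (hone : ∃ b ∈ bins, 1 ≤ Multiset.sum b)
    (hub : ∀ b ∈ bins, Multiset.sum b ≤ M) :
    ∃ t : Multiset (Multiset ℝ),
      Relation.ReflTransGen MergeStep bins t ∧
      (¬ ∃ b ∈ t, Multiset.sum b < 1) ∧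
      ∀ b ∈ t, 1 ≤ Multiset.sum b ∧ Multiset.sum b < max 2 (M + 1) := by
  have hinv : MergeInvariant M bins :=
    { nonneg := fun b hb => Multiset.sum_nonneg fun x hx => (hitems b hb x hx).1.le
      lt := fun b hb => (hub b hb).trans_lt (lt_add_one M)
      witness := fun _ => let ⟨b, hb, hb1⟩ := hone; ⟨b, hb, hb1, hub b hb⟩ }
  obtain ⟨t, hbt, hterm, ht⟩ := hinv.exists_terminal
  exact ⟨t, hbt, hterm, fun b hb =>
    ⟨not_lt.1 fun hb1 => hterm ⟨b, hb, hb1⟩, (ht.lt b hb).trans_le (le_max_right _ _)⟩⟩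

/-- Starting from bins with items in `(0,1]`, total at least 1, some bin of
level at least 1, and maximum level `M ≥ 1`, repeatedly merging the two
lowest-level bins while some bin has level `< 1` terminates in a packing in
which every bin has level in `[1, max 2 (M+1))`. -/
theorem stmt_16 (bins : Multiset (Multiset ℝ)) (M : ℝ) (hM : 1 ≤ M)
    (hitems : ∀ b ∈ bins, ∀ x ∈ b, 0 < x ∧ x ≤ 1)
    (htotal : 1 ≤ (bins.map Multiset.sum).sum)
    (hone : ∃ b ∈ bins, 1 ≤ Multiset.sum b)
    (hub : ∀ b ∈ bins, Multiset.sum b ≤ M) :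
    ∃ t : Multiset (Multiset ℝ),
      Relation.ReflTransGen MergeStep bins t ∧
      (¬ ∃ b ∈ t, Multiset.sum b < 1) ∧
      ∀ b ∈ t, 1 ≤ Multiset.sum b ∧ Multiset.sum b < max 2 (M + 1) :=
  stmt_16_general bins M hitems hone hub
end

section
/- Suppose a greedy completion places small items (each of size ≤ ε) one at a time into the bin of lowest current level, starting from an initial collection of bins whose total eventual content equals the item multiset of a feasible packing P* with all bin totals at most OPT. Then no bin in the greedy completion exceeds level (1+ε)·OPT + ε. -/
/-!
A bin receiving an item is a least-full bin, so its level is at most the average level, which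
stays at most `OPT` because the total content never exceeds `b · OPT`. Hence every bin stays
at most `OPT + ε` throughout the greedy run.
-/

/-- One greedy step: the item `y` is added to a bin of currently lowest level. -/
def GreedyStep (b : ℕ) (y : ℝ) (L L' : Fin b → ℝ) : Prop :=
  ∃ i, (∀ j, L i ≤ L j) ∧ L' = Function.update L i (L i + y)

/-- Greedy completion: the items of `ys` are placed one at a time, each into a
bin of lowest current level. -/
def GreedyRun (b : ℕ) : List ℝ → (Fin b → ℝ) → (Fin b → ℝ) → Prop
  | [], L, L' => L' = L
  | y :: ys, L, L'' => ∃ L', GreedyStep b y L L' ∧ GreedyRun b ys L' L''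

section

variable {b : ℕ} {y C δ : ℝ} {L L' : Fin b → ℝ}

theorem le_of_forall_le_of_sum_le {i : Fin b} (hmin : ∀ j, L i ≤ L j)
    (hsum : ∑ j, L j ≤ b * C) : L i ≤ C := by
  have hb : (0 : ℝ) < b := by exact_mod_cast i.pos
  have hmul : (b : ℝ) * L i ≤ ∑ j, L j := by
    simpa using Finset.card_nsmul_le_sum Finset.univ L (L i) fun j _ => hmin j
  exact le_of_mul_le_mul_left (hmul.trans hsum) hb

theorem GreedyStep.sum_eq (h : GreedyStep b y L L') : ∑ i, L' i = ∑ i, L i + y := by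
  obtain ⟨i, -, rfl⟩ := h
  rw [Finset.sum_update_of_mem (Finset.mem_univ i), ← Finset.add_sum_erase _ _ (Finset.mem_univ i),
    Finset.sdiff_singleton_eq_erase]
  ring

theorem GreedyStep.le_of_sum_le (h : GreedyStep b y L L') (hy : y ≤ δ)
    (hL : ∀ i, L i ≤ C + δ) (hsum : ∑ i, L i ≤ b * C) (i : Fin b) : L' i ≤ C + δ := by
  obtain ⟨j, hmin, rfl⟩ := h
  rcases eq_or_ne i j with rfl | hij
  · have := le_of_forall_le_of_sum_le hmin hsum
    simp only [Function.update_self]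
    linarith
  · simpa [Function.update_of_ne hij] using hL i

theorem GreedyRun.le_of_sum_le {ys : List ℝ} (hrun : GreedyRun b ys L L')
    (hys : ∀ y ∈ ys, 0 ≤ y ∧ y ≤ δ) (hL : ∀ i, L i ≤ C + δ)
    (htotal : ∑ i, L i + ys.sum ≤ b * C) (i : Fin b) : L' i ≤ C + δ := by
  induction ys generalizing L with
  | nil =>
    rw [show L' = L from hrun]
    exact hL i
  | cons y ys ih =>
    obtain ⟨L₁, hstep, hrun₁⟩ := hrun
    have hy := hys y List.mem_cons_self
    have hrest : 0 ≤ ys.sum := List.sum_nonneg fun z hz => (hys z (List.mem_cons_of_mem y hz)).1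
    rw [List.sum_cons] at htotal
    refine ih hrun₁ (fun z hz => hys z (List.mem_cons_of_mem y hz))
      (hstep.le_of_sum_le hy.2 hL (by linarith)) ?_
    rw [hstep.sum_eq]
    linarith

end

theorem stmt_19_general (b : ℕ) (ε OPT : ℝ) (hε : 0 < ε)
    (hOPT : 1 ≤ OPT)
    (L0 : Fin b → ℝ) (ys : List ℝ)
    (hys : ∀ y ∈ ys, 0 < y ∧ y ≤ ε)
    (hL0 : ∀ i, 0 ≤ L0 i ∧ L0 i ≤ OPT)
    (htotal : (∑ i, L0 i) + ys.sum ≤ (b : ℝ) * OPT)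
    (L' : Fin b → ℝ) (hrun : GreedyRun b ys L0 L') :
    ∀ i, L' i ≤ (1 + ε) * OPT + ε := by
  intro i
  have hlevel : L' i ≤ OPT + ε :=
    hrun.le_of_sum_le (fun y hy => ⟨(hys y hy).1.le, (hys y hy).2⟩)
      (fun j => by linarith [(hL0 j).2]) htotal i
  have hεOPT : 0 ≤ ε * OPT := mul_nonneg hε.le (zero_le_one.trans hOPT)
  linarith

/-- Greedily inserting the small items (each of size in `(0, ε]`) of a feasible
packing `P*` with all bin levels at most `OPT` (so bin levels start at most
`OPT` and the total content is that of `P*`, at most `b·OPT`) results in no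
bin exceeding level `(1+ε)·OPT + ε`. -/
theorem stmt_19 (b : ℕ) (hb : 0 < b) (ε OPT : ℝ) (hε : 0 < ε)
    (hOPT : 1 ≤ OPT)
    (L0 : Fin b → ℝ) (ys : List ℝ)
    (hys : ∀ y ∈ ys, 0 < y ∧ y ≤ ε)
    (hL0 : ∀ i, 0 ≤ L0 i ∧ L0 i ≤ OPT)
    (htotal : (∑ i, L0 i) + ys.sum ≤ (b : ℝ) * OPT)
    (L' : Fin b → ℝ) (hrun : GreedyRun b ys L0 L') :
    ∀ i, L' i ≤ (1 + ε) * OPT + ε :=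
  stmt_19_general b ε OPT hε hOPT L0 ys hys hL0 htotal L' hrun
end
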